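/- For a real matrix F_d ∈ ℝ^{2n×2n} of the block form F_d = [[0, I], [−I, J̄ − R̄]] with J̄ skew-symmetric and R̄ symmetric positive definite, F_d is Hurwitz: all its eigenvalues have strictly negative real part. -/

import Mathlib

/-!
If `F v = μ v` with `v = (x, y)` complex, then `Re (v* F v) = Re μ · |v|²`. Splitting `v` into
real and imaginary parts, the real quadratic form of `F = [[0, I], [-I, J - R]]` is
`u ↦ -(u₂ᵀ R u₂)`: the off-diagonal blocks and `J` are skew and contribute nothing. Hence
`Re μ · |v|² = -Re (y* R y)`, which is negative because `y ≠ 0` (if `y = 0`, the second block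
row of the eigenvalue equation forces `x = 0`).
-/

open Matrix ComplexOrder

variable {n : Type*} [Fintype n]

theorem Matrix.exists_mulVec_eq_smul_of_mem_spectrum [DecidableEq n] {K : Type*} [Field K]
    {A : Matrix n n K} {μ : K} (hμ : μ ∈ spectrum K A) : ∃ v ≠ 0, A *ᵥ v = μ • v := by
  rw [← spectrum_toLin', ← Module.End.hasEigenvalue_iff_mem_spectrum] at hμ
  obtain ⟨v, hv⟩ := hμ.exists_hasEigenvector
  exact ⟨v, hv.2, hv.apply_eq_smul⟩

theorem re_star_dotProduct_mulVec_of_mulVec_eq_smul {A : Matrix n n ℂ} {μ : ℂ} {v : n → ℂ}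
    (hv : A *ᵥ v = μ • v) : (star v ⬝ᵥ (A *ᵥ v)).re = μ.re * (star v ⬝ᵥ v).re := by
  have him : (star v ⬝ᵥ v).im = 0 :=
    (Complex.nonneg_iff.mp (dotProduct_star_self_nonneg v)).2.symm
  rw [hv, dotProduct_smul, smul_eq_mul, Complex.mul_re, him, mul_zero, sub_zero]

theorem re_star_dotProduct_map_ofReal_mulVec (M : Matrix n n ℝ) (x : n → ℂ) :
    (star x ⬝ᵥ (M.map Complex.ofReal *ᵥ x)).re =
      (Complex.re ∘ x) ⬝ᵥ (M *ᵥ (Complex.re ∘ x)) +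
        (Complex.im ∘ x) ⬝ᵥ (M *ᵥ (Complex.im ∘ x)) := by
  simp only [dotProduct, mulVec, Finset.mul_sum, ← Finset.sum_add_distrib, Complex.re_sum,
    map_apply, Pi.star_apply, Function.comp_apply, Complex.mul_re, Complex.star_def,
    Complex.conj_re, Complex.conj_im, Complex.ofReal_re, Complex.ofReal_im, Complex.mul_im]
  exact Finset.sum_congr rfl fun i _ => Finset.sum_congr rfl fun j _ => by ring

theorem Matrix.PosDef.re_star_dotProduct_map_ofReal_mulVec_pos {R : Matrix n n ℝ}
    (hR : R.PosDef) {x : n → ℂ} (hx : x ≠ 0) :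
    0 < (star x ⬝ᵥ (R.map Complex.ofReal *ᵥ x)).re := by
  have hre := hR.posSemidef.dotProduct_mulVec_nonneg (Complex.re ∘ x)
  have him := hR.posSemidef.dotProduct_mulVec_nonneg (Complex.im ∘ x)
  simp only [star_trivial] at hre him
  rw [re_star_dotProduct_map_ofReal_mulVec]
  by_cases h : Complex.re ∘ x = 0
  · have h' : Complex.im ∘ x ≠ 0 := fun h' =>
      hx (funext fun i => Complex.ext (congrFun h i) (congrFun h' i))
    simpa using add_pos_of_nonneg_of_pos hre (hR.dotProduct_mulVec_pos h')
  · simpa using add_pos_of_pos_of_nonneg (hR.dotProduct_mulVec_pos h) him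

theorem dotProduct_mulVec_self_eq_zero_of_transpose_eq_neg {R : Type*} [CommRing R]
    [IsAddTorsionFree R] {J : Matrix n n R} (hJ : Jᵀ = -J) (u : n → R) :
    u ⬝ᵥ (J *ᵥ u) = 0 := by
  refine self_eq_neg.mp ?_
  calc u ⬝ᵥ (J *ᵥ u) = (Jᵀ *ᵥ u) ⬝ᵥ u := by rw [mulVec_transpose, dotProduct_mulVec]
    _ = -(u ⬝ᵥ (J *ᵥ u)) := by rw [hJ, neg_mulVec, neg_dotProduct, dotProduct_comm]

theorem dotProduct_fromBlocks_mulVec_self [DecidableEq n] {R : Type*} [CommRing R]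
    (S : Matrix n n R) (u : n ⊕ n → R) :
    u ⬝ᵥ (fromBlocks 0 1 (-1) S *ᵥ u) = (u ∘ Sum.inr) ⬝ᵥ (S *ᵥ (u ∘ Sum.inr)) := by
  obtain ⟨a, b, rfl⟩ : ∃ a b, u = Sum.elim a b := ⟨_, _, (Sum.elim_comp_inl_inr u).symm⟩
  simp only [fromBlocks_mulVec, zero_mulVec, one_mulVec, neg_mulVec, zero_add,
    sumElim_dotProduct_sumElim, Sum.elim_comp_inl, Sum.elim_comp_inr, dotProduct_add,
    dotProduct_neg, dotProduct_comm a b]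
  abel

theorem dotProduct_fromBlocks_sub_mulVec_self [DecidableEq n] {R : Type*} [CommRing R]
    [IsAddTorsionFree R] {J : Matrix n n R} (hJ : Jᵀ = -J) (P : Matrix n n R)
    (u : n ⊕ n → R) :
    u ⬝ᵥ (fromBlocks 0 1 (-1) (J - P) *ᵥ u) = -((u ∘ Sum.inr) ⬝ᵥ (P *ᵥ (u ∘ Sum.inr))) := by
  rw [dotProduct_fromBlocks_mulVec_self, sub_mulVec, dotProduct_sub,
    dotProduct_mulVec_self_eq_zero_of_transpose_eq_neg hJ, zero_sub]

theorem eq_zero_of_mulVec_eq_smul_of_comp_inr_eq_zero [DecidableEq n] (S : Matrix n n ℝ)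
    {μ : ℂ} {v : n ⊕ n → ℂ} (hv : (fromBlocks 0 1 (-1) S).map Complex.ofReal *ᵥ v = μ • v)
    (hy : v ∘ Sum.inr = 0) : v = 0 := by
  have hy' : ∀ j, v (Sum.inr j) = 0 := congrFun hy
  have hx : ∀ i, v (Sum.inl i) = 0 := fun i => by
    simpa [mulVec, dotProduct, Fintype.sum_sum_type, hy', one_apply, apply_ite Complex.ofReal,
      ite_mul] using congrFun hv (Sum.inr i)
  funext k
  cases k with
  | inl i => exact hx i
  | inr j => exact hy' j

/-- The block matrix F_d = [[0, I], [−I, J̄ − R̄]] with J̄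
skew-symmetric and R̄ symmetric positive definite is Hurwitz. -/
theorem stmt14 {n : ℕ} (J R : Matrix (Fin n) (Fin n) ℝ)
    (hJ : Jᵀ = -J) (hR : R.PosDef)
    (Fd : Matrix (Fin n ⊕ Fin n) (Fin n ⊕ Fin n) ℝ)
    (hFd : Fd = Matrix.fromBlocks 0 1 (-1) (J - R)) :
    ∀ μ ∈ spectrum ℂ (Fd.map Complex.ofReal), μ.re < 0 := by
  intro μ hμ
  subst hFd
  obtain ⟨v, hv0, hv⟩ := exists_mulVec_eq_smul_of_mem_spectrum hμ
  have hy : v ∘ Sum.inr ≠ 0 := fun hy =>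
    hv0 (eq_zero_of_mulVec_eq_smul_of_comp_inr_eq_zero _ hv hy)
  have hquad : μ.re * (star v ⬝ᵥ v).re =
      -(star (v ∘ Sum.inr) ⬝ᵥ (R.map Complex.ofReal *ᵥ (v ∘ Sum.inr))).re := by
    rw [← re_star_dotProduct_mulVec_of_mulVec_eq_smul hv, re_star_dotProduct_map_ofReal_mulVec,
      re_star_dotProduct_map_ofReal_mulVec, dotProduct_fromBlocks_sub_mulVec_self hJ,
      dotProduct_fromBlocks_sub_mulVec_self hJ, neg_add]
    rfl
  have hv_pos : 0 < (star v ⬝ᵥ v).re :=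
    (Complex.pos_iff.mp (dotProduct_star_self_pos_iff.mpr hv0)).1
  have hy_pos := hR.re_star_dotProduct_map_ofReal_mulVec_pos hy
  by_contra! hμ_nonneg
  linarith [mul_nonneg hμ_nonneg hv_pos.le]
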